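/- Under the same hypotheses as the previous derivative bound (k ≥ 3, cocompact torsion-free Fuchsian Γ, and the sum bound Σ_γ (|z−γz̄||cz̄+d|)^{−2n} ≤ (4π/(2k−1)) C_{X,k} (2y)^{−2n} for all n ≥ k), the mixed second derivative satisfies |∂²B_k(z)/∂z∂z̄| ≤ π(80k² + 8k)/(2k−1) · C_{X,k}/(2y)^{2k+2}. -/

import Mathlib

/-! The `γ`-term of `∂²B_k/∂z∂z̄` is bounded by two terms of the majorant series
`Σ_γ (|z - γz̄| |cz̄ + d|)^{-2n}`: the first summand gives the `n = k + 1` term directly, and in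
the second the extra factor `|c| / (|z̄ - γz| |cz + d|)` is at most `1 / y²`, because
`|cz + d| ≥ |Im (cz + d)| = |c| y` and `|z̄ - γz| ≥ |Im (z̄ - γz)| = y + Im (γz) ≥ y`.
Summing and inserting the assumed bounds for `n = k + 1` and `n = k` gives
`(16k² + 8k) + 64k²` times `π C / ((2k - 1) (2y)^{2k+2})`. -/

/-- The Möbius transform of `γ ∈ SL(2,ℝ)` applied to a complex number `w`. -/
noncomputable def moebius (γ : Matrix.SpecialLinearGroup (Fin 2) ℝ) (w : ℂ) : ℂ :=
  ((γ.1 0 0 : ℂ) * w + (γ.1 0 1 : ℂ)) / ((γ.1 1 0 : ℂ) * w + (γ.1 1 1 : ℂ))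

/-- The `γ`-term of the termwise mixed second derivative `∂²B_k/∂z∂z̄`:
`-2k(2k+1)(√-1)^{2k}/((z̄-γz)^{2k+2}(cz+d)^{2k+2}) + 4ck²(√-1)^{2k}/((z̄-γz)^{2k+1}(cz+d)^{2k+1})`. -/
noncomputable def ddBterm (k : ℕ) (z : ℂ) (γ : Matrix.SpecialLinearGroup (Fin 2) ℝ) : ℂ :=
  -((2 * k : ℂ) * (2 * k + 1) * Complex.I ^ (2 * k) /
      (((starRingEnd ℂ) z - moebius γ z) ^ (2 * k + 2) *
        ((γ.1 1 0 : ℂ) * z + (γ.1 1 1 : ℂ)) ^ (2 * k + 2))) +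
    (4 * (γ.1 1 0 : ℂ) * (k : ℂ) ^ 2 * Complex.I ^ (2 * k) /
      (((starRingEnd ℂ) z - moebius γ z) ^ (2 * k + 1) *
        ((γ.1 1 0 : ℂ) * z + (γ.1 1 1 : ℂ)) ^ (2 * k + 1)))

open ComplexConjugate

section Moebius

variable (γ : Matrix.SpecialLinearGroup (Fin 2) ℝ)

lemma det_eq_one_fin_two : γ.1 0 0 * γ.1 1 1 - γ.1 0 1 * γ.1 1 0 = 1 :=
  (Matrix.det_fin_two _).symm.trans γ.2

lemma conj_moebius (w : ℂ) : conj (moebius γ w) = moebius γ (conj w) := by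
  simp [moebius]

lemma norm_conj_sub_moebius (z : ℂ) : ‖conj z - moebius γ z‖ = ‖z - moebius γ (conj z)‖ := by
  rw [← Complex.norm_conj, map_sub, Complex.conj_conj, conj_moebius]

lemma norm_denom_conj (z : ℂ) :
    ‖(γ.1 1 0 : ℂ) * conj z + γ.1 1 1‖ = ‖(γ.1 1 0 : ℂ) * z + γ.1 1 1‖ := by
  rw [← Complex.norm_conj]
  simp

lemma moebius_im (w : ℂ) :
    (moebius γ w).im = w.im / Complex.normSq ((γ.1 1 0 : ℂ) * w + γ.1 1 1) := by
  simp only [moebius, Complex.div_im, Complex.add_im, Complex.add_re, Complex.mul_im,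
    Complex.mul_re, Complex.ofReal_re, Complex.ofReal_im, div_sub_div_same]
  congr 1
  linear_combination w.im * det_eq_one_fin_two γ

lemma abs_mul_im_le_norm_denom {z : ℂ} (hz : 0 ≤ z.im) :
    |γ.1 1 0| * z.im ≤ ‖(γ.1 1 0 : ℂ) * z + γ.1 1 1‖ := by
  simpa [abs_mul, abs_of_nonneg hz] using
    Complex.abs_im_le_norm ((γ.1 1 0 : ℂ) * z + γ.1 1 1)

lemma denom_ne_zero {z : ℂ} (hz : 0 < z.im) : (γ.1 1 0 : ℂ) * z + γ.1 1 1 ≠ 0 := by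
  intro h
  have hc : γ.1 1 0 = 0 := by
    simpa [hz.ne'] using congrArg Complex.im h
  have hd : γ.1 1 1 = 0 := by
    simpa [hc] using congrArg Complex.re h
  simpa [hc, hd] using det_eq_one_fin_two γ

lemma im_le_norm_conj_sub_moebius {z : ℂ} (hz : 0 ≤ z.im) :
    z.im ≤ ‖conj z - moebius γ z‖ := by
  have him : (conj z - moebius γ z).im = -(z.im + (moebius γ z).im) := by
    simp only [Complex.sub_im, Complex.conj_im]; ring
  have hγz : 0 ≤ (moebius γ z).im := by
    rw [moebius_im]; exact div_nonneg hz (Complex.normSq_nonneg _)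
  calc z.im ≤ |(conj z - moebius γ z).im| := by
        rw [him, abs_neg]; exact (le_add_of_nonneg_right hγz).trans (le_abs_self _)
    _ ≤ _ := Complex.abs_im_le_norm _

end Moebius

lemma norm_ddBterm_le (k : ℕ) {z : ℂ} (hz : 0 < z.im) (γ : Matrix.SpecialLinearGroup (Fin 2) ℝ) :
    ‖ddBterm k z γ‖ ≤
      2 * k * (2 * k + 1) / (‖z - moebius γ (conj z)‖ *
          ‖(γ.1 1 0 : ℂ) * conj z + γ.1 1 1‖) ^ (2 * (k + 1)) +
        4 * k ^ 2 / z.im ^ 2 / (‖z - moebius γ (conj z)‖ *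
          ‖(γ.1 1 0 : ℂ) * conj z + γ.1 1 1‖) ^ (2 * k) := by
  rw [← norm_conj_sub_moebius, norm_denom_conj, ddBterm]
  set A := ‖conj z - moebius γ z‖
  set B := ‖(γ.1 1 0 : ℂ) * z + γ.1 1 1‖
  have hAB : 0 < A * B :=
    mul_pos (hz.trans_le (im_le_norm_conj_sub_moebius γ hz.le))
      (norm_pos_iff.2 (denom_ne_zero γ hz))
  have hc : |γ.1 1 0| / (A * B) ≤ 1 / z.im ^ 2 := by
    rw [div_le_div_iff₀ hAB (by positivity), one_mul, sq]
    calc |γ.1 1 0| * (z.im * z.im) = |γ.1 1 0| * z.im * z.im := by ring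
      _ ≤ B * A := mul_le_mul (abs_mul_im_le_norm_denom γ hz.le)
          (im_le_norm_conj_sub_moebius γ hz.le) hz.le (norm_nonneg _)
      _ = A * B := mul_comm B A
  have hnorm_two_k_add_one : ‖(2 * k + 1 : ℂ)‖ = 2 * k + 1 := by
    exact_mod_cast Complex.norm_natCast (2 * k + 1)
  calc _ ≤ 2 * k * (2 * k + 1) / (A * B) ^ (2 * (k + 1)) +
          4 * k ^ 2 * (|γ.1 1 0| / (A * B)) / (A * B) ^ (2 * k) := by
        refine (norm_add_le _ _).trans_eq ?_
        simp only [norm_neg, norm_div, norm_mul, norm_pow, Complex.norm_I, one_pow, mul_one,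
          Complex.norm_real, Real.norm_eq_abs, Complex.norm_natCast, Complex.norm_ofNat,
          hnorm_two_k_add_one, mul_pow]
        ring
    _ ≤ 2 * k * (2 * k + 1) / (A * B) ^ (2 * (k + 1)) +
          4 * k ^ 2 * (1 / z.im ^ 2) / (A * B) ^ (2 * k) := by gcongr
    _ = _ := by ring

theorem statement10_general (Γ : Subgroup (Matrix.SpecialLinearGroup (Fin 2) ℝ))
    (k : ℕ) (z : ℂ) (hz : 0 < z.im) (C : ℝ)
    (hsum : ∀ n : ℕ, k ≤ n → Summable fun γ : Γ =>
      1 / (norm ((z - moebius (γ : Matrix.SpecialLinearGroup (Fin 2) ℝ)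
            ((starRingEnd ℂ) z))) *
          norm (((γ : Matrix.SpecialLinearGroup (Fin 2) ℝ).1 1 0 : ℂ) *
            (starRingEnd ℂ) z +
            ((γ : Matrix.SpecialLinearGroup (Fin 2) ℝ).1 1 1 : ℂ))) ^ (2 * n))
    (hbound : ∀ n : ℕ, k ≤ n → (∑' γ : Γ,
        1 / (norm ((z - moebius (γ : Matrix.SpecialLinearGroup (Fin 2) ℝ)
              ((starRingEnd ℂ) z))) *
            norm (((γ : Matrix.SpecialLinearGroup (Fin 2) ℝ).1 1 0 : ℂ) *
              (starRingEnd ℂ) z +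
              ((γ : Matrix.SpecialLinearGroup (Fin 2) ℝ).1 1 1 : ℂ))) ^ (2 * n)) ≤
      4 * Real.pi / (2 * (k : ℝ) - 1) * C / (2 * z.im) ^ (2 * n)) :
    norm (∑' γ : Γ, ddBterm k z (γ : Matrix.SpecialLinearGroup (Fin 2) ℝ)) ≤
      Real.pi * (80 * (k : ℝ) ^ 2 + 8 * k) / (2 * (k : ℝ) - 1) * C /
        (2 * z.im) ^ (2 * k + 2) := by
  have hmajorant := (((hsum (k + 1) k.le_succ).mul_left (2 * k * (2 * k + 1) : ℝ)).add
    ((hsum k le_rfl).mul_left (4 * k ^ 2 / z.im ^ 2))).hasSum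
  refine (tsum_of_norm_bounded hmajorant fun γ => ?_).trans ?_
  · simpa only [mul_one_div] using norm_ddBterm_le k hz γ.1
  · rw [Summable.tsum_add ((hsum _ k.le_succ).mul_left _) ((hsum _ le_rfl).mul_left _),
      tsum_mul_left, tsum_mul_left]
    calc _ ≤ 2 * k * (2 * k + 1) *
            (4 * Real.pi / (2 * (k : ℝ) - 1) * C / (2 * z.im) ^ (2 * (k + 1))) +
          4 * k ^ 2 / z.im ^ 2 * (4 * Real.pi / (2 * (k : ℝ) - 1) * C / (2 * z.im) ^ (2 * k)) := by
          gcongr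
          exacts [hbound _ k.le_succ, hbound _ le_rfl]
      _ = _ := by ring

/-- If for all `n ≥ k` one has `Σ_γ (|z - γz̄| |cz̄+d|)^{-2n} ≤ (4π/(2k-1)) C (2y)^{-2n}`,
then the termwise mixed second derivative of `B_k` satisfies
`|∂²B_k/∂z∂z̄| ≤ π(80k² + 8k)/(2k-1) · C/(2y)^{2k+2}`. -/
theorem statement10 (Γ : Subgroup (Matrix.SpecialLinearGroup (Fin 2) ℝ))
    (k : ℕ) (hk : 3 ≤ k) (z : ℂ) (hz : 0 < z.im) (C : ℝ)
    (hsum : ∀ n : ℕ, k ≤ n → Summable fun γ : Γ =>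
      1 / (norm ((z - moebius (γ : Matrix.SpecialLinearGroup (Fin 2) ℝ)
            ((starRingEnd ℂ) z))) *
          norm (((γ : Matrix.SpecialLinearGroup (Fin 2) ℝ).1 1 0 : ℂ) *
            (starRingEnd ℂ) z +
            ((γ : Matrix.SpecialLinearGroup (Fin 2) ℝ).1 1 1 : ℂ))) ^ (2 * n))
    (hbound : ∀ n : ℕ, k ≤ n → (∑' γ : Γ,
        1 / (norm ((z - moebius (γ : Matrix.SpecialLinearGroup (Fin 2) ℝ)
              ((starRingEnd ℂ) z))) *
            norm (((γ : Matrix.SpecialLinearGroup (Fin 2) ℝ).1 1 0 : ℂ) *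
              (starRingEnd ℂ) z +
              ((γ : Matrix.SpecialLinearGroup (Fin 2) ℝ).1 1 1 : ℂ))) ^ (2 * n)) ≤
      4 * Real.pi / (2 * (k : ℝ) - 1) * C / (2 * z.im) ^ (2 * n))
    (hS : Summable fun γ : Γ => ddBterm k z (γ : Matrix.SpecialLinearGroup (Fin 2) ℝ))
    (hS1 : Summable fun γ : Γ =>
      -((2 * (k : ℂ)) * (2 * k + 1) * Complex.I ^ (2 * k) /
        (((starRingEnd ℂ) z - moebius (γ : Matrix.SpecialLinearGroup (Fin 2) ℝ) z) ^ (2 * k + 2) *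
          (((γ : Matrix.SpecialLinearGroup (Fin 2) ℝ).1 1 0 : ℂ) * z +
            ((γ : Matrix.SpecialLinearGroup (Fin 2) ℝ).1 1 1 : ℂ)) ^ (2 * k + 2)))) :
    norm (∑' γ : Γ, ddBterm k z (γ : Matrix.SpecialLinearGroup (Fin 2) ℝ)) ≤
      Real.pi * (80 * (k : ℝ) ^ 2 + 8 * k) / (2 * (k : ℝ) - 1) * C /
        (2 * z.im) ^ (2 * k + 2) :=
  statement10_general Γ k z hz C hsum hbound
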